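/- For every (x,t) ∈ ℝ^d × ℝ, the difference of posterior variances satisfies σ²_D̃(x,t) − σ²_D(x,t) = E·k((x,t),(x₁,t₁))² + k((x,t),(x₁,t₁))·Σ_{j=2}^{n} c_j·k((x,t),(x_j,t_j)) + κ̃(x,t)ᵀ M κ̃(x,t), where c ∈ ℝ^{n−1} is defined by cᵀ = G + Hᵀ and M = F − Δ̃⁻¹. -/

import Mathlib

/-!
Write `Δ` as the bordered matrix with corner `λ + σ²`, border `k₁` and lower block `Δ̃`. The block
inverse can be computed with the Schur complement of either diagonal block: that of `Δ̃` yields the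
first row `(E, G)` of `Δ⁻¹`, that of the corner yields the first column `H` and the lower block `F`.
Expanding `κᵀ Δ⁻¹ κ` in these blocks and subtracting `κ̃ᵀ Δ̃⁻¹ κ̃` gives the formula.
-/

open Matrix

def unitSumFinEquiv (n : ℕ) : Unit ⊕ Fin n ≃ Fin (n + 1) where
  toFun := Sum.elim (fun _ => 0) Fin.succ
  invFun := Fin.cases (Sum.inl ()) Sum.inr
  left_inv := by rintro (_ | _) <;> rfl
  right_inv := fun i => Fin.cases rfl (fun _ => rfl) i

namespace Matrix

theorem inv_fromBlocks_of_isUnit {R : Type*} [CommRing R] {l m : Type*} [Fintype l] [Fintype m]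
    [DecidableEq l] [DecidableEq m] {A : Matrix l l R} {B : Matrix l m R} {C : Matrix m l R}
    {D : Matrix m m R} (hA : IsUnit A) (hD : IsUnit D) (h : IsUnit (fromBlocks A B C D)) :
    (fromBlocks A B C D)⁻¹ =
      fromBlocks (A - B * D⁻¹ * C)⁻¹ (-((A - B * D⁻¹ * C)⁻¹ * B * D⁻¹))
        (-((D - C * A⁻¹ * B)⁻¹ * C * A⁻¹)) (D - C * A⁻¹ * B)⁻¹ := by
  let := hA.invertible
  let := hD.invertible
  let := h.invertible
  let := (isUnit_fromBlocks_iff_of_invertible₂₂.mp h).invertible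
  let := (isUnit_fromBlocks_iff_of_invertible₁₁.mp h).invertible
  have h₂₂ := invOf_fromBlocks₂₂_eq A B C D
  have h₁₁ := invOf_fromBlocks₁₁_eq A B C D
  simp only [invOf_eq_nonsing_inv] at h₂₂ h₁₁
  rw [h₂₂] at h₁₁ ⊢
  obtain ⟨-, -, h₂₁_eq, h₂₂_eq⟩ := fromBlocks_inj.mp h₁₁
  rw [h₂₁_eq, h₂₂_eq]

section Bordered

variable {α : Type*} {n : ℕ}

def bordered (a : α) (r c : Fin n → α) (D : Matrix (Fin n) (Fin n) α) :
    Matrix (Fin (n + 1)) (Fin (n + 1)) α :=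
  of (Fin.cons (Fin.cons a r) fun i => Fin.cons (c i) (D i))

theorem eq_bordered (Q : Matrix (Fin (n + 1)) (Fin (n + 1)) α) :
    Q = bordered (Q 0 0) (fun j => Q 0 j.succ) (fun i => Q i.succ 0)
      (Q.submatrix Fin.succ Fin.succ) := by
  ext i j
  exact Fin.cases (Fin.cases rfl fun _ => rfl) (fun _ => Fin.cases rfl fun _ => rfl) i j

theorem bordered_submatrix_unitSumFinEquiv (a : α) (r c : Fin n → α)
    (D : Matrix (Fin n) (Fin n) α) :
    (bordered a r c D).submatrix (unitSumFinEquiv n) (unitSumFinEquiv n) =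
      fromBlocks (of fun _ _ => a) (replicateRow Unit r) (replicateCol Unit c) D := by
  ext (_ | i) (_ | j) <;> rfl

theorem dotProduct_bordered_mulVec [CommSemiring α] (a : α) (r c : Fin n → α)
    (D : Matrix (Fin n) (Fin n) α) (x : Fin (n + 1) → α) :
    x ⬝ᵥ bordered a r c D *ᵥ x = a * x 0 ^ 2 + x 0 * (r ⬝ᵥ fun j => x j.succ) +
      x 0 * ((fun i => x i.succ) ⬝ᵥ c) + (fun i => x i.succ) ⬝ᵥ D *ᵥ fun j => x j.succ := by
  simp only [dotProduct, mulVec, Fin.sum_univ_succ, bordered, of_apply, Fin.cons_zero,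
    Fin.cons_succ, Finset.mul_sum, Finset.sum_add_distrib, mul_add]
  ring_nf

end Bordered

theorem inv_bordered {K : Type*} [Field K] {n : ℕ} {a : K} {r c : Fin n → K}
    {D : Matrix (Fin n) (Fin n) K} (ha : a ≠ 0) (hD : IsUnit D) (h : IsUnit (bordered a r c D)) :
    (bordered a r c D)⁻¹ =
      bordered (a - r ⬝ᵥ D⁻¹ *ᵥ c)⁻¹ (-((a - r ⬝ᵥ D⁻¹ *ᵥ c)⁻¹ • (r ᵥ* D⁻¹)))
        (-(a⁻¹ • ((D - a⁻¹ • vecMulVec c r)⁻¹ *ᵥ c))) (D - a⁻¹ • vecMulVec c r)⁻¹ := by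
  have hA : IsUnit (of fun _ _ => a : Matrix Unit Unit K) := by
    simp [isUnit_iff_isUnit_det, ha]
  have h_schur_D : (of fun _ _ => a) - replicateRow Unit r * D⁻¹ * replicateCol Unit c =
      of fun _ _ => a - r ⬝ᵥ D⁻¹ *ᵥ c := by
    rw [← replicateRow_vecMul, replicateRow_mul_replicateCol, dotProduct_mulVec]
    rfl
  have h_schur_A : D - replicateCol Unit c * (of fun _ _ => a : Matrix Unit Unit K)⁻¹ *
      replicateRow Unit r = D - a⁻¹ • vecMulVec c r := by
    ext
    simp only [inv_subsingleton, of_apply, Ring.inverse_eq_inv', sub_apply, mul_apply,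
      Finset.univ_unique, PUnit.default_eq_unit, replicateCol_apply, diagonal_apply_eq,
      Finset.sum_const, Finset.card_singleton, one_smul, replicateRow_apply, smul_apply,
      vecMulVec_apply, smul_eq_mul, sub_right_inj]
    ring
  let e := unitSumFinEquiv n
  apply (reindex e.symm e.symm).injective
  rw [← isUnit_submatrix_equiv e e, bordered_submatrix_unitSumFinEquiv] at h
  simp only [reindex_apply, Equiv.symm_symm]
  rw [← inv_submatrix_equiv, bordered_submatrix_unitSumFinEquiv,
    bordered_submatrix_unitSumFinEquiv, inv_fromBlocks_of_isUnit hA hD h, h_schur_D, h_schur_A]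
  congr 1 <;> ext
  · simp
  · simp [mul_apply, vecMul, dotProduct, Finset.mul_sum, mul_assoc]
  · simp [mul_apply, mulVec, dotProduct, mul_comm]

end Matrix

theorem stmt_3_general
    (d n : ℕ)
    (lam sig : ℝ)
    (kS kT : ℝ → ℝ)
    (hkS0 : kS 0 = 1) (hkT0 : kT 0 = 1)
    (k : (EuclideanSpace ℝ (Fin d) × ℝ) → (EuclideanSpace ℝ (Fin d) × ℝ) → ℝ)
    (hk : ∀ p q, k p q = lam * kS (‖p.1 - q.1‖) * kT (|p.2 - q.2|))
    (pts : Fin (n + 1) → EuclideanSpace ℝ (Fin d) × ℝ)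
    (Δ : Matrix (Fin (n + 1)) (Fin (n + 1)) ℝ)
    (hΔ : ∀ i j, Δ i j = k (pts i) (pts j) + sig ^ 2 * (if i = j then 1 else 0))
    (hPD : Δ.PosDef)
    (Δt : Matrix (Fin n) (Fin n) ℝ)
    (hΔt : Δt = Δ.submatrix Fin.succ Fin.succ)
    (k1 : Fin n → ℝ)
    (hk1 : ∀ j : Fin n, k1 j = k (pts 0) (pts j.succ))
    (E : ℝ) (hE : E = (lam + sig ^ 2 - k1 ⬝ᵥ Δt⁻¹ *ᵥ k1)⁻¹)
    (F : Matrix (Fin n) (Fin n) ℝ)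
    (hF : F = (Δt - (lam + sig ^ 2)⁻¹ • vecMulVec k1 k1)⁻¹)
    (G : Fin n → ℝ) (hG : G = -(E • (k1 ᵥ* Δt⁻¹)))
    (H : Fin n → ℝ) (hH : H = -((lam + sig ^ 2)⁻¹ • (F *ᵥ k1)))
    (σ2D σ2Dt : (EuclideanSpace ℝ (Fin d) × ℝ) → ℝ)
    (hσ2D : ∀ p, σ2D p = lam -
      (fun i : Fin (n + 1) => k p (pts i)) ⬝ᵥ Δ⁻¹ *ᵥ (fun i : Fin (n + 1) => k p (pts i)))
    (hσ2Dt : ∀ p, σ2Dt p = lam -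
      (fun j : Fin n => k p (pts j.succ)) ⬝ᵥ Δt⁻¹ *ᵥ (fun j : Fin n => k p (pts j.succ)))
    (c : Fin n → ℝ) (hc : c = G + H)
    (M : Matrix (Fin n) (Fin n) ℝ) (hM : M = F - Δt⁻¹) :
    ∀ p : EuclideanSpace ℝ (Fin d) × ℝ,
      σ2Dt p - σ2D p =
        E * (k p (pts 0)) ^ 2 + k p (pts 0) * ∑ j : Fin n, c j * k p (pts j.succ) +
          (fun j : Fin n => k p (pts j.succ)) ⬝ᵥ M *ᵥ (fun j : Fin n => k p (pts j.succ)) := by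
  have hk_self : ∀ p, k p p = lam := fun p => by simp [hk, hkS0, hkT0]
  have hk_symm : ∀ p q, k p q = k q p := fun p q => by rw [hk, hk, norm_sub_rev, abs_sub_comm]
  have hΔ_bordered : Δ = bordered (lam + sig ^ 2) k1 k1 Δt := by
    refine (eq_bordered Δ).trans ?_
    congr 1
    · simp [hΔ, hk_self]
    · ext j; simp [hΔ, hk1, (Fin.succ_ne_zero j).symm]
    · ext i; simp [hΔ, hk1, hk_symm (pts i.succ), Fin.succ_ne_zero i]
    · exact hΔt.symm
  have hΔt_unit : IsUnit Δt := hΔt ▸ (hPD.submatrix (Fin.succ_injective n)).isUnit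
  rw [hΔ_bordered] at hPD
  have ha : lam + sig ^ 2 ≠ 0 := (hPD.diag_pos (i := 0)).ne'
  have hΔ_inv : Δ⁻¹ = bordered E G H F := by
    rw [hΔ_bordered, inv_bordered ha hΔt_unit hPD.isUnit, ← hE, ← hF, ← hG, ← hH]
  intro p
  rw [hσ2Dt, hσ2D, hΔ_inv, dotProduct_bordered_mulVec, hc, hM, sub_mulVec, dotProduct_sub,
    dotProduct_comm _ H]
  simp only [dotProduct, Pi.add_apply, add_mul, Finset.sum_add_distrib]
  ring

/-- Difference of posterior variances after removing the first observation (equation (26)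
of the paper): `σ²_D̃ − σ²_D = E·k(·,(x₁,t₁))² + k(·,(x₁,t₁))·Σⱼ cⱼ·k(·,(xⱼ,tⱼ)) + κ̃ᵀMκ̃`. -/
theorem stmt_3
    (d n : ℕ) (hd : 1 ≤ d) (hn : 1 ≤ n)
    (lam sig : ℝ) (hlam : 0 < lam) (hsig : 0 < sig)
    (kS kT : ℝ → ℝ)
    (hkSmeas : Measurable kS) (hkTmeas : Measurable kT)
    (hkSrange : ∀ r, kS r ∈ Set.Icc (0 : ℝ) 1) (hkTrange : ∀ r, kT r ∈ Set.Icc (0 : ℝ) 1)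
    (hkS0 : kS 0 = 1) (hkT0 : kT 0 = 1)
    (k : (EuclideanSpace ℝ (Fin d) × ℝ) → (EuclideanSpace ℝ (Fin d) × ℝ) → ℝ)
    (hk : ∀ p q, k p q = lam * kS (‖p.1 - q.1‖) * kT (|p.2 - q.2|))
    (pts : Fin (n + 1) → EuclideanSpace ℝ (Fin d) × ℝ)
    (Δ : Matrix (Fin (n + 1)) (Fin (n + 1)) ℝ)
    (hΔ : ∀ i j, Δ i j = k (pts i) (pts j) + sig ^ 2 * (if i = j then 1 else 0))
    (hPD : Δ.PosDef)
    (Δt : Matrix (Fin n) (Fin n) ℝ)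
    (hΔt : Δt = Δ.submatrix Fin.succ Fin.succ)
    (k1 : Fin n → ℝ)
    (hk1 : ∀ j : Fin n, k1 j = k (pts 0) (pts j.succ))
    (E : ℝ) (hE : E = (lam + sig ^ 2 - k1 ⬝ᵥ Δt⁻¹ *ᵥ k1)⁻¹)
    (F : Matrix (Fin n) (Fin n) ℝ)
    (hF : F = (Δt - (lam + sig ^ 2)⁻¹ • vecMulVec k1 k1)⁻¹)
    (G : Fin n → ℝ) (hG : G = -(E • (k1 ᵥ* Δt⁻¹)))
    (H : Fin n → ℝ) (hH : H = -((lam + sig ^ 2)⁻¹ • (F *ᵥ k1)))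
    (σ2D σ2Dt : (EuclideanSpace ℝ (Fin d) × ℝ) → ℝ)
    (hσ2D : ∀ p, σ2D p = lam -
      (fun i : Fin (n + 1) => k p (pts i)) ⬝ᵥ Δ⁻¹ *ᵥ (fun i : Fin (n + 1) => k p (pts i)))
    (hσ2Dt : ∀ p, σ2Dt p = lam -
      (fun j : Fin n => k p (pts j.succ)) ⬝ᵥ Δt⁻¹ *ᵥ (fun j : Fin n => k p (pts j.succ)))
    (c : Fin n → ℝ) (hc : c = G + H)
    (M : Matrix (Fin n) (Fin n) ℝ) (hM : M = F - Δt⁻¹) :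
    ∀ p : EuclideanSpace ℝ (Fin d) × ℝ,
      σ2Dt p - σ2D p =
        E * (k p (pts 0)) ^ 2 + k p (pts 0) * ∑ j : Fin n, c j * k p (pts j.succ) +
          (fun j : Fin n => k p (pts j.succ)) ⬝ᵥ M *ᵥ (fun j : Fin n => k p (pts j.succ)) :=
  stmt_3_general d n lam sig kS kT hkS0 hkT0 k hk pts Δ hΔ hPD Δt hΔt k1 hk1 E hE F hF G hG H hH σ2D
    σ2Dt hσ2D hσ2Dt c hc M hM
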